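/- Fix a discount factor 0 < c < 1. Let h : Ω → [0,1] be a function and let ω, ω' ∈ Ω be two trajectories such that there exist an expression f of the logic L_σ and a rational time s ≥ 0 with |h(ω) − h(ω')| ≤ c^s |f(ω(s)) − f(ω'(s))|. Then for every δ > 0 there exists an expression g of the logic L_τ such that |h(ω) − g(ω)| ≤ 2δ and |h(ω') − g(ω')| ≤ 2δ. -/

import Mathlib

open MeasureTheory Topology Filter BoundedContinuousFunction NNReal

noncomputable section

/-- A 1-bounded pseudometric on a type `X`. -/
structure IsPseudometric {X : Type*} (m : X → X → ℝ) : Prop where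
  nonneg : ∀ x y, 0 ≤ m x y
  le_one : ∀ x y, m x y ≤ 1
  refl : ∀ x, m x x = 0
  symm : ∀ x y, m x y = m y x
  triangle : ∀ x y z, m x z ≤ m x y + m y z

/-- `γ` is a coupling of `P` and `Q`. -/
def IsCoupling {X Y : Type*} [MeasurableSpace X] [MeasurableSpace Y]
    (γ : Measure (X × Y)) (P : Measure X) (Q : Measure Y) : Prop :=
  IsProbabilityMeasure γ ∧ γ.map Prod.fst = P ∧ γ.map Prod.snd = Q

/-- The optimal transport cost `W(c)(P,Q) = inf_{γ ∈ Γ(P,Q)} ∫ c dγ`. -/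
def Wc {X : Type*} [MeasurableSpace X] (c : X → X → ℝ) (P Q : Measure X) : ℝ :=
  sInf {r : ℝ | ∃ γ : Measure (X × X), IsCoupling γ P Q ∧ r = ∫ z, c z.1 z.2 ∂γ}

/-- The space of (bounded) continuous trajectories `[0,∞) → E`, with the uniform metric. -/
abbrev Traj (E : Type*) [PseudoMetricSpace E] := BoundedContinuousFunction ℝ≥0 E

instance {E : Type*} [PseudoMetricSpace E] : MeasurableSpace (Traj E) := borel _
instance {E : Type*} [PseudoMetricSpace E] : BorelSpace (Traj E) := ⟨rfl⟩

/-- The discounted uniform pseudometric `U_c(m)(ω,ω') = sup_{t ≥ 0} c^t · m(ω(t), ω'(t))`. -/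
def Udisc {E : Type*} [PseudoMetricSpace E] (c : ℝ) (m : E → E → ℝ)
    (ω ω' : Traj E) : ℝ :=
  ⨆ t : ℝ≥0, c ^ (t : ℝ) * m (ω t) (ω' t)

/-- `P_t(x)`: the pushforward of `ℙ^x` under evaluation at time `t`. -/
def kernelAt {E : Type*} [PseudoMetricSpace E] [MeasurableSpace E]
    (ℙ : E → Measure (Traj E)) (t : ℝ≥0) (x : E) : Measure E :=
  (ℙ x).map fun ω => ω t

/-- The functional `F_c(m)(x,y) = sup_{t ≥ 0} c^t W(m)(P_t(x), P_t(y))`. -/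
def Ffun {E : Type*} [PseudoMetricSpace E] [MeasurableSpace E]
    (ℙ : E → Measure (Traj E)) (c : ℝ) (m : E → E → ℝ) (x y : E) : ℝ :=
  ⨆ t : ℝ≥0, c ^ (t : ℝ) * Wc m (kernelAt ℙ t x) (kernelAt ℙ t y)

/-- The functional `G_c(m)(x,y) = W(U_c(m))(ℙ^x, ℙ^y)`. -/
def Gfun {E : Type*} [PseudoMetricSpace E] [MeasurableSpace E]
    (ℙ : E → Measure (Traj E)) (c : ℝ) (m : E → E → ℝ) (x y : E) : ℝ :=
  Wc (Udisc c m) (ℙ x) (ℙ y)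

/-- The family `x ↦ ℙ^x` is weakly continuous: if `xₙ → x` then
`∫ F dℙ^{xₙ} → ∫ F dℙ^x` for every bounded continuous `F`. -/
def WeaklyContinuousFamily {A B : Type*} [TopologicalSpace A] [TopologicalSpace B]
    [MeasurableSpace B] (ℙ : A → Measure B) : Prop :=
  ∀ (F : B →ᵇ ℝ) (x : A) (u : ℕ → A), Tendsto u atTop (nhds x) →
    Tendsto (fun n => ∫ ω, F ω ∂(ℙ (u n))) atTop (nhds (∫ ω, F ω ∂(ℙ x)))

mutual
/-- Expressions of the state logic `L_σ : f ::= q | obs | 1 − f | ∫ g`,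
with `q ∈ [0,1] ∩ ℚ`. -/
inductive Lsig : Type where
  | const : {q : ℚ // 0 ≤ q ∧ q ≤ 1} → Lsig
  | obs : Lsig
  | compl : Lsig → Lsig
  | integ : Ltau → Lsig

/-- Expressions of the trajectory logic
`L_τ : g ::= f ∘ ev_t | min{g₁,g₂} | max{g₁,g₂} | g ⊖ q | g ⊕ q`,
with `q ∈ [0,1] ∩ ℚ` and `t ∈ ℚ≥0`. -/
inductive Ltau : Type where
  | ev : Lsig → NNRat → Ltau
  | minE : Ltau → Ltau → Ltau
  | maxE : Ltau → Ltau → Ltau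
  | subQ : Ltau → {q : ℚ // 0 ≤ q ∧ q ≤ 1} → Ltau
  | addQ : Ltau → {q : ℚ // 0 ≤ q ∧ q ≤ 1} → Ltau
end

mutual
/-- Interpretation of `L_σ` expressions as functions `E → [0,1]`. -/
def semSig {E : Type*} [PseudoMetricSpace E] [MeasurableSpace E]
    (obs : E → ℝ) (ℙ : E → Measure (Traj E)) (c : ℝ) : Lsig → E → ℝ
  | .const q => fun _ => (q.1 : ℝ)
  | .obs => fun x => obs x
  | .compl f => fun x => 1 - semSig obs ℙ c f x
  | .integ g => fun x => ∫ ω, semTau obs ℙ c g ω ∂(ℙ x)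

/-- Interpretation of `L_τ` expressions as functions `Ω → [0,1]`. -/
def semTau {E : Type*} [PseudoMetricSpace E] [MeasurableSpace E]
    (obs : E → ℝ) (ℙ : E → Measure (Traj E)) (c : ℝ) : Ltau → Traj E → ℝ
  | .ev f t => fun ω => c ^ (t : ℝ) * semSig obs ℙ c f (ω (t : ℝ≥0))
  | .minE g₁ g₂ => fun ω => min (semTau obs ℙ c g₁ ω) (semTau obs ℙ c g₂ ω)
  | .maxE g₁ g₂ => fun ω => max (semTau obs ℙ c g₁ ω) (semTau obs ℙ c g₂ ω)
  | .subQ g q => fun ω => max 0 (semTau obs ℙ c g ω - (q.1 : ℝ))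
  | .addQ g q => fun ω => min 1 (semTau obs ℙ c g ω + (q.1 : ℝ))
end

mutual
theorem semSig_mem_Icc {E : Type*} [PseudoMetricSpace E] [MeasurableSpace E]
    (obs : E → ℝ) (ℙ : E → Measure (Traj E)) (c : ℝ) (hc0 : 0 ≤ c) (hc1 : c ≤ 1)
    (hobs01 : ∀ x, obs x ∈ Set.Icc (0 : ℝ) 1) (hprob : ∀ x, IsProbabilityMeasure (ℙ x)) :
    ∀ (f : Lsig) (x : E), semSig obs ℙ c f x ∈ Set.Icc (0 : ℝ) 1
  | .const q, x => by
    simp only [semSig, Set.mem_Icc]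
    exact ⟨by exact_mod_cast q.2.1, by exact_mod_cast q.2.2⟩
  | .obs, x => hobs01 x
  | .compl f, x => by
    have := semSig_mem_Icc obs ℙ c hc0 hc1 hobs01 hprob f x
    simp only [semSig, Set.mem_Icc] at *
    constructor <;> linarith [this.1, this.2]
  | .integ g, x => by
    have hg : ∀ ω, semTau obs ℙ c g ω ∈ Set.Icc (0 : ℝ) 1 :=
      fun ω => semTau_mem_Icc obs ℙ c hc0 hc1 hobs01 hprob g ω
    have h0 : (0 : ℝ) ≤ ∫ ω, semTau obs ℙ c g ω ∂(ℙ x) :=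
      integral_nonneg fun ω => (hg ω).1
    have h1 : ∫ ω, semTau obs ℙ c g ω ∂(ℙ x) ≤ 1 := by
      have := hprob x
      have hb : ‖∫ ω, semTau obs ℙ c g ω ∂(ℙ x)‖ ≤ 1 * ((ℙ x) Set.univ).toReal := by
        apply norm_integral_le_of_norm_le_const
        filter_upwards with ω
        rw [Real.norm_eq_abs, abs_le]
        exact ⟨by linarith [(hg ω).1], (hg ω).2⟩
      rw [measure_univ, ENNReal.toReal_one, mul_one, Real.norm_eq_abs, abs_le] at hb
      exact hb.2
    simp only [semSig, Set.mem_Icc]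
    exact ⟨h0, h1⟩

theorem semTau_mem_Icc {E : Type*} [PseudoMetricSpace E] [MeasurableSpace E]
    (obs : E → ℝ) (ℙ : E → Measure (Traj E)) (c : ℝ) (hc0 : 0 ≤ c) (hc1 : c ≤ 1)
    (hobs01 : ∀ x, obs x ∈ Set.Icc (0 : ℝ) 1) (hprob : ∀ x, IsProbabilityMeasure (ℙ x)) :
    ∀ (g : Ltau) (ω : Traj E), semTau obs ℙ c g ω ∈ Set.Icc (0 : ℝ) 1
  | .ev f t, ω => by
    have hf := semSig_mem_Icc obs ℙ c hc0 hc1 hobs01 hprob f (ω (t : ℝ≥0))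
    have hp0 : (0 : ℝ) ≤ c ^ (t : ℝ) := Real.rpow_nonneg hc0 _
    have hp1 : c ^ (t : ℝ) ≤ 1 := Real.rpow_le_one hc0 hc1 (by positivity)
    simp only [semTau, Set.mem_Icc] at *
    constructor
    · exact mul_nonneg hp0 hf.1
    · calc c ^ (t : ℝ) * semSig obs ℙ c f (ω (t : ℝ≥0)) ≤ 1 * 1 :=
            mul_le_mul hp1 hf.2 hf.1 zero_le_one
        _ = 1 := mul_one 1
  | .minE g₁ g₂, ω => by
    have h1 := semTau_mem_Icc obs ℙ c hc0 hc1 hobs01 hprob g₁ ω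
    have h2 := semTau_mem_Icc obs ℙ c hc0 hc1 hobs01 hprob g₂ ω
    simp only [semTau, Set.mem_Icc] at *
    exact ⟨le_min h1.1 h2.1, min_le_of_left_le h1.2⟩
  | .maxE g₁ g₂, ω => by
    have h1 := semTau_mem_Icc obs ℙ c hc0 hc1 hobs01 hprob g₁ ω
    have h2 := semTau_mem_Icc obs ℙ c hc0 hc1 hobs01 hprob g₂ ω
    simp only [semTau, Set.mem_Icc] at *
    exact ⟨le_max_of_le_left h1.1, max_le h1.2 h2.2⟩
  | .subQ g q, ω => by
    have h1 := semTau_mem_Icc obs ℙ c hc0 hc1 hobs01 hprob g ω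
    simp only [semTau, Set.mem_Icc] at *
    have hq : (0:ℝ) ≤ (q.1 : ℝ) := by exact_mod_cast q.2.1
    exact ⟨le_max_left _ _, max_le (by linarith) (by linarith [h1.2])⟩
  | .addQ g q, ω => by
    have h1 := semTau_mem_Icc obs ℙ c hc0 hc1 hobs01 hprob g ω
    simp only [semTau, Set.mem_Icc] at *
    have hq : (0:ℝ) ≤ (q.1 : ℝ) := by exact_mod_cast q.2.1
    exact ⟨le_min zero_le_one (by linarith [h1.1]), min_le_left _ _⟩
end

/-- There is a rational within `δ` below `x`, inside `[0,1]`. -/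
lemma rat_close_below (x δ : ℝ) (hx0 : 0 ≤ x) (hx1 : x ≤ 1) (hδ : 0 < δ) :
    ∃ q : ℚ, 0 ≤ q ∧ q ≤ 1 ∧ (q : ℝ) ≤ x ∧ x - δ ≤ (q : ℝ) := by
  rcases eq_or_lt_of_le hx0 with h | h
  · exact ⟨0, le_refl 0, zero_le_one, by simp [← h], by push_cast; linarith⟩
  · obtain ⟨q, hq1, hq2⟩ := exists_rat_btwn (show max 0 (x - δ) < x from
      max_lt h (by linarith))
    have h0 : (0 : ℝ) ≤ (q : ℝ) := le_of_lt (lt_of_le_of_lt (le_max_left _ _) hq1)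
    refine ⟨q, by exact_mod_cast h0, by exact_mod_cast le_trans hq2.le hx1, hq2.le, ?_⟩
    exact le_trans (le_max_right _ _) hq1.le

/-- There is a rational within `δ` above `x`, inside `[0,1]`. -/
lemma rat_close_above (x δ : ℝ) (hx0 : 0 ≤ x) (hx1 : x ≤ 1) (hδ : 0 < δ) :
    ∃ q : ℚ, 0 ≤ q ∧ q ≤ 1 ∧ x ≤ (q : ℝ) ∧ (q : ℝ) ≤ x + δ := by
  obtain ⟨q, hq0, hq1, hqle, hqge⟩ := rat_close_below (1 - x) δ (by linarith) (by linarith) hδ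
  refine ⟨1 - q, by linarith, by linarith, ?_, ?_⟩ <;> push_cast <;> push_cast at hqle hqge <;> linarith

/-- The construction in the ordered case: values of `h` are ordered `H' ≤ H` and the
witness `ev f s` has at least as large a gap in the same direction. -/
lemma construct_ordered {E : Type*} [PseudoMetricSpace E] [MeasurableSpace E]
    (obs : E → ℝ) (ℙ : E → Measure (Traj E)) (c : ℝ) (hc0 : 0 < c) (hc1 : c < 1)
    (hobs01 : ∀ x, obs x ∈ Set.Icc (0 : ℝ) 1) (hprob : ∀ x, IsProbabilityMeasure (ℙ x))
    (f : Lsig) (s : NNRat) (ω ω' : Traj E) (H H' : ℝ)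
    (hH'0 : 0 ≤ H') (hHH' : H' ≤ H) (hH1 : H ≤ 1)
    (hAB : H - H' ≤ c ^ (s : ℝ) * semSig obs ℙ c f (ω (s : ℝ≥0))
      - c ^ (s : ℝ) * semSig obs ℙ c f (ω' (s : ℝ≥0)))
    (δ : ℝ) (hδ : 0 < δ) :
    ∃ g : Ltau, |H - semTau obs ℙ c g ω| ≤ 2 * δ ∧ |H' - semTau obs ℙ c g ω'| ≤ 2 * δ := by
  set A := c ^ (s : ℝ) * semSig obs ℙ c f (ω (s : ℝ≥0)) with hA
  set B := c ^ (s : ℝ) * semSig obs ℙ c f (ω' (s : ℝ≥0)) with hB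
  have hcs0 : (0 : ℝ) ≤ c ^ (s : ℝ) := Real.rpow_nonneg hc0.le _
  have hcs1 : c ^ (s : ℝ) ≤ 1 := Real.rpow_le_one hc0.le hc1.le (by positivity)
  have hfmem := semSig_mem_Icc obs ℙ c hc0.le hc1.le hobs01 hprob f (ω' (s : ℝ≥0))
  have hB0 : 0 ≤ B := mul_nonneg hcs0 hfmem.1
  have hB1 : B ≤ 1 := by
    calc B ≤ 1 * 1 := mul_le_mul hcs1 hfmem.2 hfmem.1 zero_le_one
      _ = 1 := mul_one 1
  obtain ⟨q, hq0, hq1, hqB, hqBδ⟩ := rat_close_below B δ hB0 hB1 hδ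
  obtain ⟨r, hr0, hr1, hrH', hrH'δ⟩ := rat_close_below H' δ hH'0 (le_trans hHH' hH1) hδ
  obtain ⟨p, hp0, hp1, hpH, hpHδ⟩ := rat_close_above H δ (le_trans hH'0 hHH') hH1 hδ
  refine ⟨Ltau.minE (Ltau.ev (Lsig.const ⟨p, by exact_mod_cast hp0, by exact_mod_cast hp1⟩) 0)
    (Ltau.addQ (Ltau.subQ (Ltau.ev f s) ⟨q, by exact_mod_cast hq0, by exact_mod_cast hq1⟩)
      ⟨r, by exact_mod_cast hr0, by exact_mod_cast hr1⟩), ?_, ?_⟩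
  · -- at ω
    have hval : semTau obs ℙ c
        (Ltau.minE (Ltau.ev (Lsig.const ⟨p, by exact_mod_cast hp0, by exact_mod_cast hp1⟩) 0)
          (Ltau.addQ (Ltau.subQ (Ltau.ev f s) ⟨q, by exact_mod_cast hq0, by exact_mod_cast hq1⟩)
            ⟨r, by exact_mod_cast hr0, by exact_mod_cast hr1⟩)) ω
        = min ((p : ℝ)) (min 1 (max 0 (A - q) + r)) := by
      simp only [semTau, semSig]
      norm_num [Real.rpow_natCast]
      rfl
    rw [hval]
    have hAq : (0 : ℝ) ≤ A - q := by
      have : B ≤ A := by linarith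
      linarith
    rw [max_eq_right hAq]
    have hy1 : H - δ ≤ min 1 (A - (q : ℝ) + r) := by
      refine le_min (by linarith) ?_
      have : H - H' ≤ A - B := hAB
      linarith
    have hlow : H - δ ≤ min ((p : ℝ)) (min 1 (A - (q : ℝ) + r)) :=
      le_min (by linarith) hy1
    have hhigh : min ((p : ℝ)) (min 1 (A - (q : ℝ) + r)) ≤ H + δ :=
      le_trans (min_le_left _ _) hpHδ
    rw [abs_le]
    constructor <;> linarith
  · -- at ω'
    have hval : semTau obs ℙ c
        (Ltau.minE (Ltau.ev (Lsig.const ⟨p, by exact_mod_cast hp0, by exact_mod_cast hp1⟩) 0)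
          (Ltau.addQ (Ltau.subQ (Ltau.ev f s) ⟨q, by exact_mod_cast hq0, by exact_mod_cast hq1⟩)
            ⟨r, by exact_mod_cast hr0, by exact_mod_cast hr1⟩)) ω'
        = min ((p : ℝ)) (min 1 (max 0 (B - q) + r)) := by
      simp only [semTau, semSig]
      norm_num [Real.rpow_natCast]
      rfl
    rw [hval]
    have hBq : (0 : ℝ) ≤ B - q := by linarith
    rw [max_eq_right hBq]
    have hy1 : H' - δ ≤ min 1 (B - (q : ℝ) + r) := by
      refine le_min (by linarith [le_trans hHH' hH1]) (by linarith)
    have hlow : H' - δ ≤ min ((p : ℝ)) (min 1 (B - (q : ℝ) + r)) :=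
      le_min (by linarith) hy1
    have hhigh : min ((p : ℝ)) (min 1 (B - (q : ℝ) + r)) ≤ H' + 2 * δ := by
      refine le_trans (min_le_right _ _) (le_trans (min_le_right _ _) ?_)
      linarith
    rw [abs_le]
    constructor <;> linarith

theorem logic_approx_at_pair
    {E : Type*} [MetricSpace E] [PolishSpace E] [MeasurableSpace E] [BorelSpace E]
    (hΔ : ∀ x y : E, dist x y ≤ 1)
    (ℙ : E → Measure (Traj E)) (hprob : ∀ x, IsProbabilityMeasure (ℙ x))
    (obs : E → ℝ) (hobs_cont : Continuous obs) (hobs01 : ∀ x, obs x ∈ Set.Icc (0 : ℝ) 1)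
    (c : ℝ) (hc0 : 0 < c) (hc1 : c < 1)
    (h : Traj E → ℝ) (hh01 : ∀ ω, h ω ∈ Set.Icc (0 : ℝ) 1)
    (ω ω' : Traj E)
    (hyp : ∃ (f : Lsig) (s : NNRat), |h ω - h ω'| ≤
      c ^ (s : ℝ) * |semSig obs ℙ c f (ω (s : ℝ≥0)) - semSig obs ℙ c f (ω' (s : ℝ≥0))|)
    (δ : ℝ) (hδ : 0 < δ) :
    ∃ g : Ltau, |h ω - semTau obs ℙ c g ω| ≤ 2 * δ ∧
      |h ω' - semTau obs ℙ c g ω'| ≤ 2 * δ := by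
  obtain ⟨f, s, hle⟩ := hyp
  set D := semSig obs ℙ c f (ω (s : ℝ≥0)) with hD
  set D' := semSig obs ℙ c f (ω' (s : ℝ≥0)) with hD'
  have hcs0 : (0 : ℝ) ≤ c ^ (s : ℝ) := Real.rpow_nonneg hc0.le _
  by_cases hord : h ω' ≤ h ω
  · by_cases hDD : D' ≤ D
    · refine construct_ordered obs ℙ c hc0 hc1 hobs01 hprob f s ω ω' (h ω) (h ω')
        (hh01 ω').1 hord (hh01 ω).2 ?_ δ hδ
      have hd : |D - D'| = D - D' := abs_of_nonneg (by linarith)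
      rw [hd] at hle
      have h1 : h ω - h ω' ≤ |h ω - h ω'| := le_abs_self _
      have h2 : c ^ (s : ℝ) * (D - D') = c ^ (s : ℝ) * D - c ^ (s : ℝ) * D' := by ring
      linarith
    · refine construct_ordered obs ℙ c hc0 hc1 hobs01 hprob (Lsig.compl f) s ω ω' (h ω) (h ω')
        (hh01 ω').1 hord (hh01 ω).2 ?_ δ hδ
      simp only [semSig, ← hD, ← hD']
      have hd : |D - D'| = D' - D := by
        rw [abs_of_nonpos (by linarith)]; ring
      rw [hd] at hle
      have h1 : h ω - h ω' ≤ |h ω - h ω'| := le_abs_self _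
      have h2 : c ^ (s : ℝ) * (1 - D) - c ^ (s : ℝ) * (1 - D') = c ^ (s : ℝ) * (D' - D) := by
        ring
      linarith
  · push_neg at hord
    by_cases hDD : D ≤ D'
    · have key : h ω' - h ω ≤ c ^ (s : ℝ) * semSig obs ℙ c f (ω' (s : ℝ≥0))
          - c ^ (s : ℝ) * semSig obs ℙ c f (ω (s : ℝ≥0)) := by
        have hd : |D - D'| = D' - D := by
          rw [abs_of_nonpos (by linarith)]; ring
        rw [hd] at hle
        have h1 : h ω' - h ω ≤ |h ω - h ω'| := by
          rw [abs_sub_comm]; exact le_abs_self _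
        have h2 : c ^ (s : ℝ) * (D' - D) = c ^ (s : ℝ) * D' - c ^ (s : ℝ) * D := by ring
        rw [← hD, ← hD']
        linarith
      obtain ⟨g, hg1, hg2⟩ := construct_ordered obs ℙ c hc0 hc1 hobs01 hprob f s ω' ω
        (h ω') (h ω) (hh01 ω).1 hord.le (hh01 ω').2 key δ hδ
      exact ⟨g, hg2, hg1⟩
    · have key : h ω' - h ω ≤ c ^ (s : ℝ) * semSig obs ℙ c (Lsig.compl f) (ω' (s : ℝ≥0))
          - c ^ (s : ℝ) * semSig obs ℙ c (Lsig.compl f) (ω (s : ℝ≥0)) := by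
        simp only [semSig, ← hD, ← hD']
        have hd : |D - D'| = D - D' := abs_of_nonneg (by linarith)
        rw [hd] at hle
        have h1 : h ω' - h ω ≤ |h ω - h ω'| := by
          rw [abs_sub_comm]; exact le_abs_self _
        have h2 : c ^ (s : ℝ) * (1 - D') - c ^ (s : ℝ) * (1 - D) = c ^ (s : ℝ) * (D - D') := by
          ring
        linarith
      obtain ⟨g, hg1, hg2⟩ := construct_ordered obs ℙ c hc0 hc1 hobs01 hprob (Lsig.compl f) s ω' ω
        (h ω') (h ω) (hh01 ω).1 hord.le (hh01 ω').2 key δ hδ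
      exact ⟨g, hg2, hg1⟩
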